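/- arXiv:2306.08493 — 5 statements merged into one kernel-verified Lean document; each statement's English description precedes it below -/
import Mathlib

section
/- For every nonzero polynomial R in F_q[T] and every nonzero complex number s, the sum over monic divisors E of R of μ(E)·deg(E)/|E|^s equals −(∏_{P | R}(1 − 1/|P|^s)) · (Σ_{P | R} deg(P)/(|P|^s − 1)), where the product and second sum are over monic irreducible divisors P of R. -/
open Polynomial UniqueFactorizationMonoid
open scoped Classical

noncomputable section

variable {Fq : Type} [Field Fq] [Fintype Fq]

/-- The norm `|f| = q ^ deg f` of a polynomial, as a real number. -/
def pnorm (f : Fq[X]) : ℝ := (Fintype.card Fq : ℝ) ^ f.natDegree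

/-- The norm `|f| = q ^ deg f` of a polynomial, as a complex number. -/
def pnormC (f : Fq[X]) : ℂ := (Fintype.card Fq : ℂ) ^ f.natDegree

/-- The Möbius function for polynomials over a finite field. -/
def polyMu (f : Fq[X]) : ℤ :=
  if Squarefree f then (-1) ^ (normalizedFactors f).toFinset.card else 0

/-- The number of distinct monic irreducible factors of `f`. -/
def omegaP (f : Fq[X]) : ℕ := (normalizedFactors f).toFinset.card

/-- The Euler totient of `f` : the number of units of `Fq[X]/(f)`. -/
def polyPhi (f : Fq[X]) : ℕ := Nat.card (Fq[X] ⧸ Ideal.span {f})ˣ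

section AuxLemmas

variable {α : Type*}

lemma aux_prod_cpow (S : Finset α) (x : α → ℝ) (hx : ∀ i ∈ S, 0 ≤ x i) (s : ℂ) :
    ((∏ i ∈ S, x i : ℝ) : ℂ) ^ s = ∏ i ∈ S, ((x i : ℝ) : ℂ) ^ s := by
  induction S using Finset.induction_on with
  | empty => simp [Complex.one_cpow]
  | insert _ _ ha ih =>
    rename_i a S'
    rw [Finset.prod_insert ha, Finset.prod_insert ha, Complex.ofReal_mul,
      Complex.mul_cpow_ofReal_nonneg (hx a (Finset.mem_insert_self a S'))
        (Finset.prod_nonneg fun i hi => hx i (Finset.mem_insert_of_mem hi)),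
      ih fun i hi => hx i (Finset.mem_insert_of_mem hi)]

lemma aux_sign_prod (y : α → ℂ) (T : Finset α) :
    ∑ S ∈ T.powerset, ((-1 : ℂ) ^ S.card * ∏ P ∈ S, (y P)⁻¹)
      = ∏ P ∈ T, (1 - (y P)⁻¹) := by
  induction T using Finset.induction_on with
  | empty => simp
  | insert _ _ ha ih =>
    rename_i a T'
    rw [Finset.sum_powerset_insert ha, Finset.prod_insert ha, ← ih]
    have h2 : ∑ S ∈ T'.powerset, ((-1 : ℂ) ^ (insert a S).card * ∏ P ∈ insert a S, (y P)⁻¹)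
        = ∑ S ∈ T'.powerset, (-(y a)⁻¹) * ((-1 : ℂ) ^ S.card * ∏ P ∈ S, (y P)⁻¹) := by
      refine Finset.sum_congr rfl fun S hS => ?_
      have haS : a ∉ S := fun h => ha (Finset.mem_powerset.mp hS h)
      rw [Finset.card_insert_of_notMem haS, Finset.prod_insert haS, pow_succ]
      ring
    rw [h2, ← Finset.mul_sum]
    ring

lemma aux_mu_sum (d y : α → ℂ) (T : Finset α) (hy0 : ∀ P ∈ T, y P ≠ 0)
    (hy1 : ∀ P ∈ T, y P ≠ 1) :
    ∑ S ∈ T.powerset, ((-1 : ℂ) ^ S.card * (∑ P ∈ S, d P) * ∏ P ∈ S, (y P)⁻¹)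
      = -(∏ P ∈ T, (1 - (y P)⁻¹)) * ∑ P ∈ T, d P / (y P - 1) := by
  induction T using Finset.induction_on with
  | empty => simp
  | insert _ _ ha ih =>
    rename_i a T'
    have hy0' : ∀ P ∈ T', y P ≠ 0 := fun P hP => hy0 P (Finset.mem_insert_of_mem hP)
    have hy1' : ∀ P ∈ T', y P ≠ 1 := fun P hP => hy1 P (Finset.mem_insert_of_mem hP)
    have hya0 : y a ≠ 0 := hy0 a (Finset.mem_insert_self a T')
    have hya1 : y a ≠ 1 := hy1 a (Finset.mem_insert_self a T')
    rw [Finset.sum_powerset_insert ha, Finset.prod_insert ha, Finset.sum_insert ha]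
    have h2 : ∑ S ∈ T'.powerset,
          ((-1 : ℂ) ^ (insert a S).card * (∑ P ∈ insert a S, d P) * ∏ P ∈ insert a S, (y P)⁻¹)
        = ∑ S ∈ T'.powerset, (-(y a)⁻¹) *
            (d a * ((-1 : ℂ) ^ S.card * ∏ P ∈ S, (y P)⁻¹)
              + ((-1 : ℂ) ^ S.card * (∑ P ∈ S, d P) * ∏ P ∈ S, (y P)⁻¹)) := by
      refine Finset.sum_congr rfl fun S hS => ?_
      have haS : a ∉ S := fun h => ha (Finset.mem_powerset.mp hS h)
      rw [Finset.card_insert_of_notMem haS, Finset.prod_insert haS, Finset.sum_insert haS,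
        pow_succ]
      ring
    rw [h2, ← Finset.mul_sum, Finset.sum_add_distrib, ← Finset.mul_sum, aux_sign_prod,
      ih hy0' hy1']
    have hBA : ∀ B A : ℂ,
        (-B * A) + (-(y a)⁻¹) * (d a * B + (-B * A))
          = -((1 - (y a)⁻¹) * B) * (d a / (y a - 1) + A) := by
      intro B A
      have h1 : y a - 1 ≠ 0 := sub_ne_zero.mpr hya1
      field_simp
      ring
    exact hBA _ _

end AuxLemmas

/-- Differentiated Möbius sum: for nonzero `R` and nonzero `s` (with `|P|^s ≠ 1` for all
monic irreducible divisors `P` of `R`),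
`Σ_{E|R} μ(E) deg(E) / |E|^s = -(∏_{P|R}(1 - 1/|P|^s)) * (Σ_{P|R} deg(P)/(|P|^s - 1))`. -/
theorem sum_mu_deg_div_norm_pow (R : Fq[X]) (hR : R ≠ 0) (s : ℂ) (hs : s ≠ 0)
    (hP : ∀ P ∈ (normalizedFactors R).toFinset, (pnormC P) ^ s ≠ 1) :
    ∑' E : {E : Fq[X] // E.Monic ∧ E ∣ R},
        (polyMu E.1 : ℂ) * (E.1.natDegree : ℂ) / (pnormC E.1) ^ s
      = -(∏ P ∈ (normalizedFactors R).toFinset, (1 - 1 / (pnormC P) ^ s)) *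
          ∑ P ∈ (normalizedFactors R).toFinset, (P.natDegree : ℂ) / ((pnormC P) ^ s - 1) := by
  classical
  set T : Finset Fq[X] := (normalizedFactors R).toFinset with hT
  have hq0 : (Fintype.card Fq : ℂ) ≠ 0 := by
    exact_mod_cast Nat.cast_ne_zero.mpr Fintype.card_ne_zero
  have hprime : ∀ P ∈ T, Prime P := fun P hPm =>
    prime_of_normalized_factor P (Multiset.mem_toFinset.mp hPm)
  have hnormalized : ∀ P ∈ T, normalize P = P := fun P hPm =>
    normalize_normalized_factor P (Multiset.mem_toFinset.mp hPm)
  have hmonic : ∀ P ∈ T, P.Monic := by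
    intro P hPm
    rw [← hnormalized P hPm]
    exact monic_normalize (hprime P hPm).ne_zero
  have hpnormC_ne : ∀ f : Fq[X], pnormC f ≠ 0 := fun f => pow_ne_zero _ hq0
  have hy0 : ∀ P ∈ T, (pnormC P) ^ s ≠ 0 := fun P _ => by
    rw [Ne, Complex.cpow_eq_zero_iff]
    exact fun h => hpnormC_ne P h.1
  -- the key facts about products over subsets of `T`
  have hnfS : ∀ S : Finset Fq[X], S ⊆ T →
      normalizedFactors (∏ P ∈ S, P) = S.val := by
    intro S hS
    have : ∏ P ∈ S, P = S.val.prod := by rw [Finset.prod_eq_multiset_prod, Multiset.map_id']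
    rw [this, normalizedFactors_prod_eq _ (fun a ha => (hprime a (hS ha)).irreducible)]
    exact (Multiset.map_congr rfl fun a ha => hnormalized a (hS ha)).trans
      (Multiset.map_id' _)
  have hEmonic : ∀ S : Finset Fq[X], S ⊆ T → (∏ P ∈ S, P).Monic := fun S hS =>
    monic_prod_of_monic _ _ fun P hPm => hmonic P (hS hPm)
  have hEne : ∀ S : Finset Fq[X], S ⊆ T → (∏ P ∈ S, P) ≠ 0 := fun S hS =>
    (hEmonic S hS).ne_zero
  have hEdvd : ∀ S : Finset Fq[X], S ⊆ T → (∏ P ∈ S, P) ∣ R := by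
    intro S hS
    rw [dvd_iff_normalizedFactors_le_normalizedFactors (hEne S hS) hR, hnfS S hS]
    exact Finset.val_le_iff_val_subset.mpr fun a ha => Multiset.mem_toFinset.mp (hS ha)
  have hEsf : ∀ S : Finset Fq[X], S ⊆ T → Squarefree (∏ P ∈ S, P) := by
    intro S hS
    rw [squarefree_iff_nodup_normalizedFactors (hEne S hS), hnfS S hS]
    exact S.nodup
  -- the finite set of relevant divisors
  set t : Finset Fq[X] := T.powerset.image (fun S => ∏ P ∈ S, P) with ht
  set p : Fq[X] → Prop := fun E => E.Monic ∧ E ∣ R with hp'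
  set f : Fq[X] → ℂ :=
    fun E => (polyMu E : ℂ) * (E.natDegree : ℂ) / (pnormC E) ^ s with hf
  -- every squarefree monic divisor of R is in t
  have hmem_t : ∀ E : Fq[X], E.Monic → E ∣ R → Squarefree E → E ∈ t := by
    intro E hm hd hsf
    have hE0 : E ≠ 0 := hm.ne_zero
    have hle : normalizedFactors E ≤ normalizedFactors R :=
      (dvd_iff_normalizedFactors_le_normalizedFactors hE0 hR).mp hd
    have hsub : (normalizedFactors E).toFinset ⊆ T :=
      Multiset.toFinset_subset.mpr (Multiset.subset_of_le hle)
    have hnodup : (normalizedFactors E).Nodup :=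
      (squarefree_iff_nodup_normalizedFactors hE0).mp hsf
    have hEeq : E = ∏ P ∈ (normalizedFactors E).toFinset, P := by
      have hprod : ∏ P ∈ (normalizedFactors E).toFinset, P = (normalizedFactors E).prod := by
        rw [Finset.prod_eq_multiset_prod, Multiset.map_id', Multiset.toFinset_val,
          Multiset.dedup_eq_self.mpr hnodup]
      have hmprod : (normalizedFactors E).prod.Monic := by
        refine Multiset.prod_induction _ _ (fun a b ha hb => ha.mul hb) monic_one ?_
        intro P hPm
        exact hmonic P (Multiset.mem_toFinset.mpr (Multiset.subset_of_le hle hPm))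
      rw [hprod]
      exact eq_of_monic_of_associated hm hmprod (prod_normalizedFactors hE0).symm
    rw [ht]
    exact Finset.mem_image.mpr ⟨(normalizedFactors E).toFinset,
      Finset.mem_powerset.mpr hsub, hEeq.symm⟩
  -- tsum reduces to a sum over t.subtype p
  have htsum : ∑' E : {E : Fq[X] // p E}, f E.1 = ∑ E ∈ t.subtype p, f E.1 := by
    refine tsum_eq_sum ?_
    rintro ⟨E, hm, hd⟩ hnot
    rw [Finset.mem_subtype] at hnot
    by_cases hsf : Squarefree E
    · exact absurd (hmem_t E hm hd hsf) hnot
    · simp [hf, polyMu, hsf]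
  rw [htsum, Finset.sum_subtype_eq_sum_filter]
  have hfilter : t.filter p = t := by
    refine Finset.filter_true_of_mem ?_
    intro E hE
    obtain ⟨S, hS, rfl⟩ := Finset.mem_image.mp hE
    have hS' := Finset.mem_powerset.mp hS
    exact ⟨hEmonic S hS', hEdvd S hS'⟩
  rw [hfilter, ht, Finset.sum_image ?inj]
  case inj =>
    intro S₁ h₁ S₂ h₂ heq
    have := hnfS S₁ (Finset.mem_powerset.mp h₁)
    rw [show (∏ P ∈ S₁, P) = ∏ P ∈ S₂, P from heq, hnfS S₂ (Finset.mem_powerset.mp h₂)] at this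
    exact Finset.val_injective this.symm
  -- compute each term
  have hterm : ∀ S ∈ T.powerset, f (∏ P ∈ S, P)
      = (-1 : ℂ) ^ S.card * (∑ P ∈ S, (P.natDegree : ℂ)) *
          ∏ P ∈ S, ((pnormC P) ^ s)⁻¹ := by
    intro S hSmem
    have hS : S ⊆ T := Finset.mem_powerset.mp hSmem
    have hmu : (polyMu (∏ P ∈ S, P) : ℂ) = (-1 : ℂ) ^ S.card := by
      rw [polyMu, if_pos (hEsf S hS), hnfS S hS, Finset.val_toFinset]
      push_cast
      rfl
    have hdeg : ((∏ P ∈ S, P).natDegree : ℂ) = ∑ P ∈ S, (P.natDegree : ℂ) := by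
      rw [Polynomial.natDegree_prod _ _ fun P hPm => (hprime P (hS hPm)).ne_zero]
      push_cast
      rfl
    have hnorm : (pnormC (∏ P ∈ S, P)) ^ s = ∏ P ∈ S, (pnormC P) ^ s := by
      have h1 : pnormC (∏ P ∈ S, P) = ((∏ P ∈ S, pnorm P : ℝ) : ℂ) := by
        rw [pnormC, Polynomial.natDegree_prod _ _ fun P hPm => (hprime P (hS hPm)).ne_zero]
        push_cast [pnorm, Finset.prod_pow_eq_pow_sum]
        rfl
      have h2 : ∀ P : Fq[X], pnormC P = ((pnorm P : ℝ) : ℂ) := by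
        intro P
        rw [pnormC, pnorm]
        push_cast
        rfl
      rw [h1, aux_prod_cpow S pnorm (fun P _ => by rw [pnorm]; positivity) s]
      exact Finset.prod_congr rfl fun P _ => by rw [h2]
    rw [hf]
    simp only
    rw [hmu, hdeg, hnorm, div_eq_mul_inv, ← Finset.prod_inv_distrib]
  rw [Finset.sum_congr rfl hterm,
    aux_mu_sum (fun P => (P.natDegree : ℂ)) (fun P => (pnormC P) ^ s) T hy0 hP]
  simp [one_div]
end
end

section
/- For every monic polynomial R in F_q[T], the sum over monic irreducible divisors P of R of deg(P)/(|P| − 1) is O(log ω(R)), where ω(R) is the number of distinct monic irreducible factors of R; more precisely there is an absolute constant C with Σ_{P|R} deg(P)/(|P|−1) ≤ C·(1 + log(1 + ω(R))). -/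
/-!
A monic irreducible `P` of degree `d` divides `X ^ q ^ d - X`, so there are at most `q ^ d / d`
of them, and those of degree `d` contribute at most `q ^ d / (q ^ d - 1) ≤ 2` to the sum. The
term `d / (q ^ d - 1) ≤ d / 2 ^ (d - 1)` decreases in `d`, so with a cutoff `D` satisfying
`ω(R) ≤ 2 ^ (D - 1)` the factors of degree `< D` contribute at most `2 D` and the at most `ω(R)`
others at most `ω(R) · D / 2 ^ (D - 1) ≤ D`. Taking `D = ⌊log₂ ω(R)⌋ + 2` gives the bound.
-/

open Polynomial UniqueFactorizationMonoid
open scoped Classical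

noncomputable section

variable {Fq : Type} [Field Fq] [Fintype Fq]

theorem Nat.mul_two_pow_pred_le_mul_two_pow_pred {D d : ℕ} (hD : 1 ≤ D) (hDd : D ≤ d) :
    d * 2 ^ (D - 1) ≤ D * 2 ^ (d - 1) := by
  obtain ⟨k, rfl⟩ := Nat.exists_eq_add_of_le hDd
  have hk : k + 1 ≤ 2 ^ k := Nat.lt_two_pow_self
  have hlin : D + k ≤ D * 2 ^ k := by nlinarith
  calc (D + k) * 2 ^ (D - 1) ≤ D * 2 ^ k * 2 ^ (D - 1) := Nat.mul_le_mul_right _ hlin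
    _ = D * 2 ^ (D + k - 1) := by rw [show D + k - 1 = k + (D - 1) by omega, pow_add, mul_assoc]

theorem div_pow_sub_one_le_div_two_pow_pred {q d D : ℕ} (hq : 2 ≤ q) (hD : 1 ≤ D)
    (hDd : D ≤ d) : (d : ℝ) / ((q : ℝ) ^ d - 1) ≤ D / 2 ^ (D - 1) := by
  have htwo : (2 : ℝ) ^ (d - 1) ≤ (q : ℝ) ^ d - 1 := by
    have hpow : (2 : ℝ) ^ d ≤ (q : ℝ) ^ d := by gcongr; exact_mod_cast hq
    have hsucc : (2 : ℝ) ^ d = 2 * 2 ^ (d - 1) := by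
      rw [← pow_succ']; congr 1; omega
    linarith [one_le_pow₀ (M₀ := ℝ) (n := d - 1) one_le_two]
  rw [div_le_div_iff₀ (htwo.trans_lt' (by positivity)) (by positivity)]
  calc (d : ℝ) * 2 ^ (D - 1) ≤ D * 2 ^ (d - 1) := by
        exact_mod_cast Nat.mul_two_pow_pred_le_mul_two_pow_pred hD hDd
    _ ≤ D * ((q : ℝ) ^ d - 1) := by gcongr

theorem Nat.log_two_le_two_mul_log (n : ℕ) : (Nat.log 2 n : ℝ) ≤ 2 * Real.log (1 + n) := by
  rcases Nat.eq_zero_or_pos n with rfl | hn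
  · simp
  have hlog : 0 ≤ Real.log n := Real.log_natCast_nonneg n
  calc (Nat.log 2 n : ℝ) ≤ Real.log n / Real.log 2 := by
        simpa [Real.logb] using Real.natLog_le_logb n 2
    _ ≤ 2 * Real.log n := by
        rw [div_le_iff₀ (Real.log_pos one_lt_two)]
        nlinarith [Real.log_two_gt_d9]
    _ ≤ 2 * Real.log (1 + n) := by
        gcongr
        linarith

section

variable {K : Type} [Field K] [Fintype K]

theorem natDegree_mul_card_le_card_pow {d : ℕ} (hd : d ≠ 0) {s : Finset K[X]}
    (hs : ∀ P ∈ s, Irreducible P ∧ P.Monic ∧ P.natDegree = d) :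
    d * s.card ≤ Fintype.card K ^ d := by
  have hq : 1 < Fintype.card K := Fintype.one_lt_card
  have hdvd : ∏ P ∈ s, P ∣ X ^ Fintype.card K ^ d - X := by
    refine Finset.prod_dvd_of_coprime (fun P hP Q hQ hPQ => ?_) (fun P hP => ?_)
    · refine (hs P hP).1.coprime_iff_not_dvd.2 fun h => hPQ ?_
      exact eq_of_monic_of_associated (hs P hP).2.1 (hs Q hQ).2.1
        ((hs P hP).1.associated_of_dvd (hs Q hQ).1 h)
    · rw [← Nat.card_eq_fintype_card, ← (hs P hP).2.2]
      exact (hs P hP).1.natDegree_dvd_iff_dvd_X_pow_card_pow_sub_X.1 dvd_rfl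
  have hdeg := natDegree_le_of_dvd hdvd (FiniteField.X_pow_card_pow_sub_X_ne_zero _ hd hq)
  rwa [natDegree_prod _ _ fun P hP => (hs P hP).1.ne_zero,
    Finset.sum_congr rfl fun P hP => (hs P hP).2.2, Finset.sum_const, smul_eq_mul,
    FiniteField.X_pow_card_pow_sub_X_natDegree_eq _ hd hq, mul_comm] at hdeg

theorem sum_natDegree_div_pnorm_sub_one_le_two {d : ℕ} {s : Finset K[X]}
    (hs : ∀ P ∈ s, Irreducible P ∧ P.Monic ∧ P.natDegree = d) :
    ∑ P ∈ s, (P.natDegree : ℝ) / (pnorm P - 1) ≤ 2 := by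
  rcases s.eq_empty_or_nonempty with rfl | ⟨P, hP⟩
  · simp
  have hd : d ≠ 0 := (hs P hP).2.2 ▸ (hs P hP).1.natDegree_pos.ne'
  have hcard : (d : ℝ) * s.card ≤ (Fintype.card K : ℝ) ^ d := by
    exact_mod_cast natDegree_mul_card_le_card_pow hd hs
  set Q : ℝ := (Fintype.card K : ℝ) ^ d
  have hQ : 2 ≤ Q := by
    have hq : (2 : ℝ) ≤ Fintype.card K := by exact_mod_cast Fintype.one_lt_card (α := K)
    exact hq.trans (le_self_pow₀ (hq.trans' one_le_two) hd)
  calc ∑ P ∈ s, (P.natDegree : ℝ) / (pnorm P - 1) = (d : ℝ) * s.card / (Q - 1) := by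
        rw [Finset.sum_congr rfl fun P hP => by rw [pnorm, (hs P hP).2.2], Finset.sum_const,
          nsmul_eq_mul]
        ring
    _ ≤ Q / (Q - 1) := by gcongr; linarith
    _ ≤ 2 := by rw [div_le_iff₀ (by linarith)]; linarith

variable {F : Finset K[X]}

theorem sum_filter_le_natDegree_div_pnorm_sub_one_le {D : ℕ} (hD : 1 ≤ D)
    (hFD : F.card ≤ 2 ^ (D - 1)) :
    ∑ P ∈ F with ¬P.natDegree < D, (P.natDegree : ℝ) / (pnorm P - 1) ≤ D := by
  have hterm : ∀ P ∈ {P ∈ F | ¬P.natDegree < D},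
      (P.natDegree : ℝ) / (pnorm P - 1) ≤ D / 2 ^ (D - 1) := by
    intro P hP
    exact div_pow_sub_one_le_div_two_pow_pred Fintype.one_lt_card hD
      (not_lt.1 (Finset.mem_filter.1 hP).2)
  have hcard : (Finset.card {P ∈ F | ¬P.natDegree < D} : ℝ) ≤ 2 ^ (D - 1) := by
    exact_mod_cast (Finset.card_filter_le _ _).trans hFD
  calc _ ≤ (Finset.card {P ∈ F | ¬P.natDegree < D} : ℝ) * (D / 2 ^ (D - 1)) := by
        simpa using Finset.sum_le_card_nsmul _ _ _ hterm
    _ ≤ 2 ^ (D - 1) * (D / 2 ^ (D - 1)) := by gcongr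
    _ = D := by field_simp

variable (hF : ∀ P ∈ F, Irreducible P ∧ P.Monic)
include hF

theorem sum_filter_natDegree_lt_div_pnorm_sub_one_le (D : ℕ) :
    ∑ P ∈ F with P.natDegree < D, (P.natDegree : ℝ) / (pnorm P - 1) ≤ 2 * D := by
  have hmaps : ∀ P ∈ {P ∈ F | P.natDegree < D}, P.natDegree ∈ Finset.range D := by
    intro P hP
    exact Finset.mem_range.2 (Finset.mem_filter.1 hP).2
  rw [← Finset.sum_fiberwise_of_maps_to hmaps]
  calc _ ≤ ∑ _d ∈ Finset.range D, (2 : ℝ) := by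
        refine Finset.sum_le_sum fun d _ =>
          sum_natDegree_div_pnorm_sub_one_le_two (d := d) fun P hP => ?_
        simp only [Finset.mem_filter] at hP
        exact ⟨(hF P hP.1.1).1, (hF P hP.1.1).2, hP.2⟩
    _ = 2 * D := by simp [mul_comm]

theorem sum_natDegree_div_pnorm_sub_one_le {D : ℕ} (hD : 1 ≤ D) (hFD : F.card ≤ 2 ^ (D - 1)) :
    ∑ P ∈ F, (P.natDegree : ℝ) / (pnorm P - 1) ≤ 3 * D := by
  rw [← Finset.sum_filter_add_sum_filter_not F fun P => P.natDegree < D]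
  linarith [sum_filter_natDegree_lt_div_pnorm_sub_one_le hF D,
    sum_filter_le_natDegree_div_pnorm_sub_one_le hD hFD]

end

/-- `Σ_{P|R} deg(P)/(|P|-1) ≪ log ω(R)` with an absolute implied constant. -/
theorem sum_deg_div_norm_sub_one_le : ∃ C : ℝ, 0 < C ∧
    ∀ (K : Type) [Field K] [Fintype K] (R : K[X]), R.Monic →
      ∑ P ∈ (normalizedFactors R).toFinset, (P.natDegree : ℝ) / (pnorm P - 1)
        ≤ C * (1 + Real.log (1 + omegaP R)) := by
  refine ⟨6, by norm_num, fun K _ _ R hR => ?_⟩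
  have hF : ∀ P ∈ (normalizedFactors R).toFinset, Irreducible P ∧ P.Monic := fun P hP =>
    have ⟨hirr, hmon, _⟩ :=
      (Polynomial.mem_normalizedFactors_iff hR.ne_zero).1 (Multiset.mem_toFinset.1 hP)
    ⟨hirr, hmon⟩
  have hω : omegaP R ≤ 2 ^ (Nat.log 2 (omegaP R) + 2 - 1) :=
    (Nat.lt_pow_succ_log_self one_lt_two _).le
  calc _ ≤ 3 * ((Nat.log 2 (omegaP R) + 2 : ℕ) : ℝ) :=
        sum_natDegree_div_pnorm_sub_one_le hF (by omega) hω
    _ ≤ 6 * (1 + Real.log (1 + omegaP R)) := by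
        push_cast
        linarith [Nat.log_two_le_two_mul_log (omegaP R)]
end
end

section
/- For every monic polynomial R in F_q[T] with deg(R) > 1, ω(R) ≪ log_q|R| / log_q log_q|R|, with implied constant independent of q; equivalently there is an absolute constant C with ω(R) ≤ C·deg(R)/log_q(deg R) for deg(R) > 1. -/
set_option maxHeartbeats 1000000

open Polynomial UniqueFactorizationMonoid
open scoped Classical

noncomputable section

variable {Fq : Type} [Field Fq] [Fintype Fq]

section AuxOmega

variable {K : Type} [Field K] [Fintype K]

omit [Fintype K] in
lemma OmegaAux.monic_of_mem_nf {R p : K[X]} (hp : p ∈ normalizedFactors R) :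
    p.Monic := by
  rw [← normalize_normalized_factor p hp]
  exact monic_normalize (irreducible_of_normalized_factor p hp).ne_zero

omit [Fintype K] in
lemma OmegaAux.sum_deg_le (R : K[X]) (hR : R.Monic) :
    ∑ p ∈ (normalizedFactors R).toFinset, p.natDegree ≤ R.natDegree := by
  by_cases h0 : R = 0
  · simp [h0]
  have hmon : ∀ p ∈ normalizedFactors R, Monic p := fun p hp => OmegaAux.monic_of_mem_nf hp
  have hprod : (normalizedFactors R).prod = R :=
    eq_of_monic_of_associated (by simpa using monic_multiset_prod_of_monic _ id hmon) hR
      (prod_normalizedFactors h0)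
  have hdeg : R.natDegree = ((normalizedFactors R).map natDegree).sum := by
    conv_lhs => rw [← hprod]
    exact natDegree_multiset_prod_of_monic _ hmon
  rw [hdeg]
  have hle : (normalizedFactors R).dedup ≤ normalizedFactors R := Multiset.dedup_le _
  calc ∑ p ∈ (normalizedFactors R).toFinset, p.natDegree
      = ((normalizedFactors R).dedup.map natDegree).sum := rfl
    _ ≤ ((normalizedFactors R).map natDegree).sum := by
        obtain ⟨u, hu⟩ := Multiset.le_iff_exists_add.mp (Multiset.map_le_map (f := natDegree) hle)
        rw [hu, Multiset.sum_add]
        exact Nat.le_add_right _ _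

lemma OmegaAux.card_small_le (S : Finset K[X]) (t : ℕ) :
    (S.filter fun p => p.natDegree < t).card ≤ Fintype.card K ^ t := by
  have h1 : (S.filter fun p => p.natDegree < t).card ≤ Fintype.card (Fin t → K) := by
    rw [← Finset.card_univ]
    apply Finset.card_le_card_of_injOn (fun p (i : Fin t) => p.coeff i)
      (fun _ _ => Finset.mem_univ _)
    intro p hp r hr hpr
    simp only [Finset.mem_coe, Finset.mem_filter] at hp hr
    ext i
    by_cases hi : i < t
    · exact congrFun hpr ⟨i, hi⟩
    · rw [coeff_eq_zero_of_natDegree_lt (lt_of_lt_of_le hp.2 (not_lt.mp hi)),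
        coeff_eq_zero_of_natDegree_lt (lt_of_lt_of_le hr.2 (not_lt.mp hi))]
  simpa using h1

omit [Fintype K] in
lemma OmegaAux.count_bound (S : Finset K[X]) (t : ℕ) :
    t * (S.card - (S.filter fun p => p.natDegree < t).card) ≤ ∑ p ∈ S, p.natDegree := by
  have hcard : (S.filter fun p => p.natDegree < t).card
      + (S.filter fun p => ¬ p.natDegree < t).card = S.card :=
    Finset.card_filter_add_card_filter_not _
  have h1 : t * (S.filter fun p => ¬ p.natDegree < t).card
      ≤ ∑ p ∈ S.filter fun p => ¬ p.natDegree < t, p.natDegree := by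
    rw [mul_comm, ← smul_eq_mul]
    apply Finset.card_nsmul_le_sum
    intro p hp
    exact not_lt.mp (Finset.mem_filter.mp hp).2
  calc t * (S.card - (S.filter fun p => p.natDegree < t).card)
      = t * (S.filter fun p => ¬ p.natDegree < t).card := by congr 1; omega
    _ ≤ ∑ p ∈ S.filter fun p => ¬ p.natDegree < t, p.natDegree := h1
    _ ≤ ∑ p ∈ S, p.natDegree :=
        Finset.sum_le_sum_of_subset (Finset.filter_subset _ _)

end AuxOmega

/-- For monic `R` with `deg R > 1`, `ω(R) ≪ log_q |R| / log_q log_q |R|`, i.e.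
`ω(R) ≤ C deg(R) / log_q(deg R)` with an absolute constant `C` independent of `q`. -/
theorem omega_le : ∃ C : ℝ, 0 < C ∧
    ∀ (K : Type) [Field K] [Fintype K] (R : K[X]), R.Monic → 1 < R.natDegree →
      (omegaP R : ℝ)
        ≤ C * (R.natDegree : ℝ) / (Real.log R.natDegree / Real.log (Fintype.card K)) := by
  refine ⟨8, by norm_num, ?_⟩
  intro K _ _ R hR hn
  classical
  set S : Finset K[X] := (normalizedFactors R).toFinset with hSdef
  set q : ℕ := Fintype.card K with hqdef
  set n : ℕ := R.natDegree with hndef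
  set k : ℕ := omegaP R with hkdef
  have hq2 : 2 ≤ q := Fintype.one_lt_card
  have hsum : ∑ p ∈ S, p.natDegree ≤ n := OmegaAux.sum_deg_le R hR
  have hdeg1 : ∀ p ∈ S, 1 ≤ p.natDegree := fun p hp =>
    (irreducible_of_normalized_factor p (Multiset.mem_toFinset.mp hp)).natDegree_pos
  have hkS : k = S.card := rfl
  have hk_le_n : k ≤ n := by
    calc k = ∑ _p ∈ S, 1 := by simp [hkS]
      _ ≤ ∑ p ∈ S, p.natDegree := Finset.sum_le_sum hdeg1
      _ ≤ n := hsum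
  have hn2 : (2:ℝ) ≤ (n:ℝ) := by exact_mod_cast hn
  have hq2R : (2:ℝ) ≤ (q:ℝ) := by exact_mod_cast hq2
  have hLq : 0 < Real.log q := Real.log_pos (by linarith)
  have hLn : 0 < Real.log n := Real.log_pos (by linarith)
  have hknR : (k:ℝ) ≤ (n:ℝ) := by exact_mod_cast hk_le_n
  clear_value S q n k
  rw [le_div_iff₀ (by positivity)]
  -- goal : k * (log n / log q) ≤ 8 * n
  set L : ℝ := Real.log n / Real.log q with hLdef
  have hL0 : 0 < L := by positivity
  clear_value L
  by_cases hL4 : L ≤ 4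
  · nlinarith [hL0.le, Nat.cast_nonneg (α := ℝ) k, Nat.cast_nonneg (α := ℝ) n]
  push_neg at hL4
  have hq4 : (q:ℝ)^4 < (n:ℝ) := by
    have h1 : Real.log ((q:ℝ)^4) < Real.log n := by
      rw [Real.log_pow]
      have := (lt_div_iff₀ hLq).mp (hLdef ▸ hL4)
      push_cast
      linarith
    exact (Real.log_lt_log_iff (by positivity) (by positivity)).mp h1
  have hs0 : (0:ℝ) < Real.sqrt n := Real.sqrt_pos.mpr (by linarith)
  have hssq : Real.sqrt n ^ 2 = (n:ℝ) := Real.sq_sqrt (by linarith)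
  have hq2s : (q:ℝ)^2 < Real.sqrt n := by
    rw [Real.lt_sqrt (by positivity)]
    nlinarith [hq4]
  by_cases hk2s : (k:ℝ) ≤ 2 * Real.sqrt n
  · -- small k
    have hLq2 : Real.log 2 ≤ Real.log q := Real.log_le_log (by norm_num) hq2R
    have hlog2 : (0.6931471803 : ℝ) < Real.log 2 := Real.log_two_gt_d9
    have hLns : Real.log n ≤ 2 * Real.sqrt n := by
      conv_lhs => rw [← hssq, Real.log_pow]
      have := Real.log_le_sub_one_of_pos hs0
      push_cast
      linarith
    have hLle : L ≤ 4 * Real.sqrt n := by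
      rw [hLdef, div_le_iff₀ hLq]
      nlinarith
    nlinarith [Nat.cast_nonneg (α := ℝ) k, hs0.le]
  · -- large k
    push_neg at hk2s
    have hk2q : 2 * q^2 < k := by
      have : 2 * (q:ℝ)^2 < (k:ℝ) := by nlinarith
      exact_mod_cast this
    set k₂ : ℕ := k / 2 with hk₂def
    have hk₂q : q^2 ≤ k₂ := by omega
    have hq2four : 4 ≤ q^2 := by nlinarith
    have hk₂0 : k₂ ≠ 0 := by omega
    set t : ℕ := Nat.log q k₂ with htdef
    have hqt : q ^ t ≤ k₂ := Nat.pow_log_le_self q hk₂0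
    have ht1 : 1 ≤ t := by
      have := (Nat.le_log_iff_pow_le hq2 hk₂0).mpr hk₂q
      omega
    have hklt : k₂ < q ^ (t + 1) := Nat.lt_pow_succ_log_self hq2 k₂
    clear_value k₂ t
    -- counting bound
    have hcount : t * (k - k₂) ≤ n := by
      have h1 := OmegaAux.count_bound S t
      have h2 : (S.filter fun p => p.natDegree < t).card ≤ q ^ t := by
        rw [hqdef]; exact OmegaAux.card_small_le S t
      have h3 : (S.filter fun p => p.natDegree < t).card ≤ k₂ := le_trans h2 hqt
      calc t * (k - k₂) ≤ t * (S.card - (S.filter fun p => p.natDegree < t).card) := by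
            rw [hkS] at *
            exact Nat.mul_le_mul_left t (by omega)
        _ ≤ ∑ p ∈ S, p.natDegree := h1
        _ ≤ n := hsum
    -- real versions
    have hcountR : (t:ℝ) * ((k:ℝ) / 2) ≤ (n:ℝ) := by
      have h4 : (k:ℝ) / 2 ≤ ((k - k₂ : ℕ) : ℝ) := by
        rw [Nat.cast_sub (by omega)]
        have : (k₂:ℝ) ≤ (k:ℝ) / 2 := by
          rw [hk₂def]
          rw [le_div_iff₀ (by norm_num)]
          exact_mod_cast Nat.div_mul_le_self k 2
        linarith
      calc (t:ℝ) * ((k:ℝ)/2) ≤ (t:ℝ) * ((k - k₂ : ℕ) : ℝ) := by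
            apply mul_le_mul_of_nonneg_left h4 (Nat.cast_nonneg t)
        _ ≤ (n:ℝ) := by exact_mod_cast hcount
    -- lower bound on t
    have htL : L / 2 - 1 ≤ (t:ℝ) := by
      have h5 : Real.sqrt n < (q:ℝ) ^ (t+1) := by
        have h6 : Real.sqrt n < (k:ℝ) / 2 := by linarith
        have h7 : (k:ℝ) / 2 < (k₂:ℝ) + 1 := by
          have : k < 2 * (k₂ + 1) := by omega
          have := (Nat.cast_lt (α := ℝ)).mpr this
          push_cast at this
          linarith
        have h8 : (k₂:ℝ) + 1 ≤ (q:ℝ)^(t+1) := by exact_mod_cast hklt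
        linarith
      have h9 : Real.log n / 2 < ((t:ℝ) + 1) * Real.log q := by
        have := Real.log_lt_log hs0 h5
        rw [Real.log_sqrt (by positivity), Real.log_pow] at this
        push_cast at this
        linarith
      have h10 : L < 2 * ((t:ℝ) + 1) := by
        rw [hLdef, div_lt_iff₀ hLq]
        linarith
      linarith
    -- conclude
    linarith [mul_le_mul_of_nonneg_right htL (Nat.cast_nonneg (α := ℝ) k), hcountR, hknR,
      Nat.cast_nonneg (α := ℝ) k]
end
end

section
/- Let F, H, R be monic polynomials in F_q[T] with F | R, and let z < deg(R) be a natural number. Then Σ over pairs of monic A, B with deg(AB) = z, AH ≡ B (mod F), AH ≠ B, and gcd(ABH, R) = 1, of 1/|AB|^{1/2}, is ≪ q^{z/2}·(z+1)·|H|/|F|. -/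
open Polynomial UniqueFactorizationMonoid
open scoped Classical

noncomputable section

variable {Fq : Type} [Field Fq] [Fintype Fq]

namespace OffDiagAux

set_option linter.unusedSectionVars false

variable {K : Type} [Field K] [Fintype K]

lemma monic_sub_pow_degree_lt {p : K[X]} {n : ℕ} (hp : p.Monic) (hn : p.natDegree = n) :
    (p - X ^ n).degree < (n : WithBot ℕ) := by
  have h1 : p.degree = ((X : K[X]) ^ n).degree := by
    rw [degree_X_pow, degree_eq_natDegree hp.ne_zero, hn]
  have h2 : p.leadingCoeff = ((X : K[X]) ^ n).leadingCoeff := by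
    rw [hp.leadingCoeff, leadingCoeff_X_pow]
  have := degree_sub_lt h1 hp.ne_zero h2
  rwa [degree_eq_natDegree hp.ne_zero, hn] at this

lemma splice_degree_lt {u v : K[X]} {a m n : ℕ}
    (hu : u.degree < (a : WithBot ℕ)) (hv : v.degree < (m : WithBot ℕ))
    (h : a + m ≤ n) : (u + X ^ a * v).degree < (n : WithBot ℕ) := by
  have han : (a : WithBot ℕ) ≤ (n : WithBot ℕ) := by
    exact_mod_cast (Nat.le_add_right a m).trans h
  rcases eq_or_ne v 0 with rfl | hv0
  · simpa using hu.trans_le han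
  · refine lt_of_le_of_lt (degree_add_le _ _) (max_lt (hu.trans_le han) ?_)
    have hvm : v.natDegree < m := (natDegree_lt_iff_degree_lt hv0).mpr hv
    calc (X ^ a * v).degree ≤ ((X : K[X]) ^ a).degree + v.degree := degree_mul_le _ _
      _ = ((a + v.natDegree : ℕ) : WithBot ℕ) := by
          rw [degree_X_pow, degree_eq_natDegree hv0]; push_cast; rfl
      _ < (n : WithBot ℕ) := by exact_mod_cast lt_of_lt_of_le (by omega) h

lemma splice_inj {a : ℕ} {u₁ u₂ v₁ v₂ : K[X]}
    (h₁ : u₁.degree < (a : WithBot ℕ)) (h₂ : u₂.degree < (a : WithBot ℕ))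
    (h : u₁ + X ^ a * v₁ = u₂ + X ^ a * v₂) : u₁ = u₂ ∧ v₁ = v₂ := by
  have hv : v₁ = v₂ := by
    by_contra hne
    have h0 : v₁ - v₂ ≠ 0 := sub_ne_zero.mpr hne
    have heq : (X : K[X]) ^ a * (v₁ - v₂) = u₂ - u₁ := by linear_combination h
    have hlt : (u₂ - u₁).degree < (a : WithBot ℕ) :=
      lt_of_le_of_lt (degree_sub_le _ _) (max_lt h₂ h₁)
    rw [← heq, degree_mul, degree_X_pow, degree_eq_natDegree h0, ← Nat.cast_add] at hlt
    exact absurd hlt (by exact_mod_cast not_lt.mpr (Nat.le_add_right a _))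
  subst hv
  exact ⟨add_right_cancel h, rfl⟩

lemma dvd_sub_deg_lt_eq {F u v : K[X]} (hdvd : F ∣ u - v)
    (hu : u.degree < F.degree) (hv : v.degree < F.degree) : u = v := by
  by_contra hne
  have h0 : u - v ≠ 0 := sub_ne_zero.mpr hne
  exact absurd (degree_le_of_dvd hdvd h0)
    (not_le.mpr (lt_of_le_of_lt (degree_sub_le _ _) (max_lt hu hv)))

lemma eq_of_div_mod {F u v : K[X]} (hF : F.Monic) (hdvd : F ∣ u - v)
    (hq : u /ₘ F = v /ₘ F) : u = v := by
  have hm : u %ₘ F = v %ₘ F := by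
    apply dvd_sub_deg_lt_eq ?_ (degree_modByMonic_lt _ hF) (degree_modByMonic_lt _ hF)
    have h1 := modByMonic_add_div u F
    have h2 := modByMonic_add_div v F
    have key : u %ₘ F - v %ₘ F = (u - v) - F * (u /ₘ F - v /ₘ F) := by
      linear_combination h1 - h2
    rw [key]
    exact dvd_sub hdvd (Dvd.intro _ rfl)
  calc u = u %ₘ F + F * (u /ₘ F) := (modByMonic_add_div u F).symm
    _ = v %ₘ F + F * (v /ₘ F) := by rw [hm, hq]
    _ = v := modByMonic_add_div v F

lemma monic_div {F B : K[X]} (hF : F.Monic) (hB : B.Monic)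
    (h : F.natDegree ≤ B.natDegree) : (B /ₘ F).Monic := by
  have hle : F.degree ≤ B.degree := by
    rw [degree_eq_natDegree hF.ne_zero, degree_eq_natDegree hB.ne_zero]
    exact_mod_cast h
  exact (leadingCoeff_divByMonic_of_monic hF hle).trans hB.leadingCoeff

lemma pair_facts {F H A B : K[X]} {z : ℕ} (hH : H.Monic)
    (hA : A.Monic) (hB : B.Monic) (hAB : (A * B).natDegree = z)
    (hdvd : F ∣ A * H - B) (hne : A * H ≠ B) :
    A.natDegree + B.natDegree = z ∧
      F.natDegree ≤ max (A.natDegree + H.natDegree) B.natDegree := by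
  constructor
  · rw [← hAB, hA.natDegree_mul hB]
  · have h0 : A * H - B ≠ 0 := sub_ne_zero.mpr hne
    calc F.natDegree ≤ (A * H - B).natDegree := natDegree_le_of_dvd hdvd h0
      _ ≤ max (A * H).natDegree B.natDegree := natDegree_sub_le _ _
      _ = max (A.natDegree + H.natDegree) B.natDegree := by rw [hA.natDegree_mul hH]

/-- Injective encoding of a pair `(A, B)` as a single polynomial (given `deg A`). -/
def enc (F : K[X]) (z : ℕ) (A B : K[X]) : K[X] :=
  if F.natDegree ≤ z - A.natDegree then
    (A - X ^ A.natDegree) +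
      X ^ A.natDegree * (B /ₘ F - X ^ (z - A.natDegree - F.natDegree))
  else if F.natDegree ≤ A.natDegree then
    (B - X ^ (z - A.natDegree)) +
      X ^ (z - A.natDegree) * (A /ₘ F - X ^ (A.natDegree - F.natDegree))
  else B - X ^ (z - A.natDegree)

lemma enc_degree_lt {F H A B : K[X]} {z : ℕ} (hF : F.Monic) (hH : H.Monic)
    (hA : A.Monic) (hB : B.Monic) (hAB : (A * B).natDegree = z)
    (hdvd : F ∣ A * H - B) (hne : A * H ≠ B) :
    enc F z A B ∈ degreeLT K (z + H.natDegree - F.natDegree) := by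
  obtain ⟨hab, hmax⟩ := pair_facts hH hA hB hAB hdvd hne
  have hb : z - A.natDegree = B.natDegree := by omega
  rw [mem_degreeLT]
  unfold enc
  rw [hb]
  split_ifs with h1 h2
  · exact splice_degree_lt (monic_sub_pow_degree_lt hA rfl)
      (monic_sub_pow_degree_lt (monic_div hF hB h1) (natDegree_divByMonic B hF))
      (by omega)
  · exact splice_degree_lt (monic_sub_pow_degree_lt hB rfl)
      (monic_sub_pow_degree_lt (monic_div hF hA h2) (natDegree_divByMonic A hF))
      (by omega)
  · refine (monic_sub_pow_degree_lt hB rfl).trans_le ?_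
    exact_mod_cast show B.natDegree ≤ z + H.natDegree - F.natDegree by omega

lemma enc_inj {F H A₁ B₁ A₂ B₂ : K[X]} {z : ℕ} (hF : F.Monic) (hH : H.Monic)
    (hcop : IsCoprime F H)
    (hA₁ : A₁.Monic) (hB₁ : B₁.Monic) (hAB₁ : (A₁ * B₁).natDegree = z)
    (hdvd₁ : F ∣ A₁ * H - B₁) (hne₁ : A₁ * H ≠ B₁)
    (hA₂ : A₂.Monic) (hB₂ : B₂.Monic) (hAB₂ : (A₂ * B₂).natDegree = z)
    (hdvd₂ : F ∣ A₂ * H - B₂) (hne₂ : A₂ * H ≠ B₂)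
    (hdeg : A₁.natDegree = A₂.natDegree)
    (henc : enc F z A₁ B₁ = enc F z A₂ B₂) : A₁ = A₂ ∧ B₁ = B₂ := by
  obtain ⟨hab₁, hmax₁⟩ := pair_facts hH hA₁ hB₁ hAB₁ hdvd₁ hne₁
  obtain ⟨hab₂, hmax₂⟩ := pair_facts hH hA₂ hB₂ hAB₂ hdvd₂ hne₂
  unfold enc at henc
  rw [← hdeg] at henc
  split_ifs at henc with h1 h2
  · obtain ⟨e1, e2⟩ := splice_inj (monic_sub_pow_degree_lt hA₁ rfl)
      (monic_sub_pow_degree_lt hA₂ hdeg.symm) henc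
    have hA : A₁ = A₂ := sub_left_inj.mp e1
    have hQ : B₁ /ₘ F = B₂ /ₘ F := sub_left_inj.mp e2
    have hdvdB : F ∣ B₁ - B₂ := by
      have h5 := dvd_sub hdvd₂ hdvd₁
      have heq : (A₂ * H - B₂) - (A₁ * H - B₁) = B₁ - B₂ := by rw [hA]; ring
      rwa [heq] at h5
    exact ⟨hA, eq_of_div_mod hF hdvdB hQ⟩
  · obtain ⟨e1, e2⟩ := splice_inj
      (monic_sub_pow_degree_lt hB₁ (by omega))
      (monic_sub_pow_degree_lt hB₂ (by omega)) henc
    have hB : B₁ = B₂ := sub_left_inj.mp e1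
    have hQ : A₁ /ₘ F = A₂ /ₘ F := sub_left_inj.mp e2
    have hdvdA : F ∣ A₁ - A₂ := by
      refine hcop.dvd_of_dvd_mul_right (y := A₁ - A₂) ?_
      have h5 := dvd_sub hdvd₁ hdvd₂
      have heq : (A₁ * H - B₁) - (A₂ * H - B₂) = (A₁ - A₂) * H := by rw [hB]; ring
      rwa [heq] at h5
    exact ⟨eq_of_div_mod hF hdvdA hQ, hB⟩
  · have hB : B₁ = B₂ := sub_left_inj.mp henc
    have hdvdA : F ∣ A₁ - A₂ := by
      refine hcop.dvd_of_dvd_mul_right (y := A₁ - A₂) ?_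
      have h5 := dvd_sub hdvd₁ hdvd₂
      have heq : (A₁ * H - B₁) - (A₂ * H - B₂) = (A₁ - A₂) * H := by rw [hB]; ring
      rwa [heq] at h5
    refine ⟨dvd_sub_deg_lt_eq hdvdA ?_ ?_, hB⟩
    · rw [degree_eq_natDegree hA₁.ne_zero, degree_eq_natDegree hF.ne_zero]
      exact_mod_cast show A₁.natDegree < F.natDegree by omega
    · rw [degree_eq_natDegree hA₂.ne_zero, degree_eq_natDegree hF.ne_zero]
      exact_mod_cast show A₂.natDegree < F.natDegree by omega

end OffDiagAux

open OffDiagAux in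
/-- Off-diagonal bound with one twist: for monic `F, H, R` with `F ∣ R` and `z < deg R`,
`Σ_{A,B monic, deg(AB)=z, AH ≡ B (mod F), AH ≠ B, (ABH,R)=1} |AB|^{-1/2}`
`≪ q^{z/2} (z+1) |H| / |F|`. -/
theorem offdiagonal_one_twist : ∃ C : ℝ, 0 < C ∧
    ∀ (K : Type) [Field K] [Fintype K] (F H R : K[X]), F.Monic → H.Monic → R.Monic →
      F ∣ R → ∀ z : ℕ, z < R.natDegree →
        ∑' p : {p : K[X] × K[X] // p.1.Monic ∧ p.2.Monic ∧ (p.1 * p.2).natDegree = z ∧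
              F ∣ p.1 * H - p.2 ∧ p.1 * H ≠ p.2 ∧ IsCoprime (p.1 * p.2 * H) R},
            (Real.sqrt (pnorm (p.1.1 * p.1.2)))⁻¹
          ≤ C * Real.sqrt ((Fintype.card K : ℝ) ^ z) * ((z : ℝ) + 1) * pnorm H / pnorm F := by
  refine ⟨1, one_pos, ?_⟩
  intro K _ _ F H R hF hH hR hFR z hz
  set e := z + H.natDegree - F.natDegree with he
  set St := {p : K[X] × K[X] // p.1.Monic ∧ p.2.Monic ∧ (p.1 * p.2).natDegree = z ∧
      F ∣ p.1 * H - p.2 ∧ p.1 * H ≠ p.2 ∧ IsCoprime (p.1 * p.2 * H) R} with hSt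
  -- coprimality of F and H from any element
  have hcopFH : ∀ p : St, IsCoprime F H := by
    intro p
    have hc : IsCoprime (p.1.1 * p.1.2 * H) R := p.2.2.2.2.2.2
    have h1 : IsCoprime (p.1.1 * p.1.2 * H) F := hc.of_isCoprime_of_dvd_right hFR
    exact h1.symm.of_mul_right_right
  -- the injection
  have hdegA : ∀ p : St, p.1.1.natDegree < z + 1 := by
    intro p
    have := (pair_facts hH p.2.1 p.2.2.1 p.2.2.2.1 p.2.2.2.2.1 p.2.2.2.2.2.1).1
    omega
  let φ : St → Fin (z + 1) × (degreeLT K e) := fun p =>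
    (⟨p.1.1.natDegree, hdegA p⟩,
     ⟨enc F z p.1.1 p.1.2,
      enc_degree_lt hF hH p.2.1 p.2.2.1 p.2.2.2.1 p.2.2.2.2.1 p.2.2.2.2.2.1⟩)
  have hφ : Function.Injective φ := by
    intro p₁ p₂ h
    have h1 : p₁.1.1.natDegree = p₂.1.1.natDegree :=
      congrArg (fun x => (x.1 : ℕ)) h
    have h2 : enc F z p₁.1.1 p₁.1.2 = enc F z p₂.1.1 p₂.1.2 :=
      congrArg (fun x => (x.2 : K[X])) h
    obtain ⟨hA, hB⟩ := enc_inj hF hH (hcopFH p₁)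
      p₁.2.1 p₁.2.2.1 p₁.2.2.2.1 p₁.2.2.2.2.1 p₁.2.2.2.2.2.1
      p₂.2.1 p₂.2.2.1 p₂.2.2.2.1 p₂.2.2.2.2.1 p₂.2.2.2.2.2.1 h1 h2
    exact Subtype.ext (Prod.ext hA hB)
  haveI : Finite ↥(degreeLT K e) := Finite.of_equiv _ (degreeLTEquiv K e).toEquiv.symm
  haveI : Finite St := Finite.of_injective φ hφ
  letI : Fintype St := Fintype.ofFinite _
  letI : Fintype ↥(degreeLT K e) := Fintype.ofFinite _
  have hcardLT : Fintype.card ↥(degreeLT K e) = Fintype.card K ^ e := by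
    rw [Fintype.card_congr (degreeLTEquiv K e).toEquiv]
    simp
  have hcard : Fintype.card St ≤ (z + 1) * Fintype.card K ^ e := by
    have h := Fintype.card_le_of_injective φ hφ
    rwa [Fintype.card_prod, Fintype.card_fin, hcardLT] at h
  -- rewrite the sum
  rw [tsum_fintype]
  have hterm : ∀ p : St, (Real.sqrt (pnorm (p.1.1 * p.1.2)))⁻¹ =
      (Real.sqrt ((Fintype.card K : ℝ) ^ z))⁻¹ := by
    intro p
    have h3 : (p.1.1 * p.1.2).natDegree = z := p.2.2.2.1
    simp only [pnorm, h3]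
  rw [Finset.sum_congr rfl fun p _ => hterm p, Finset.sum_const, Finset.card_univ,
    nsmul_eq_mul]
  -- final numeric inequality
  have hq0r : (0 : ℝ) < (Fintype.card K : ℝ) := by exact_mod_cast Fintype.card_pos
  have hXpos : (0 : ℝ) < (Fintype.card K : ℝ) ^ z := pow_pos hq0r z
  have hs : Real.sqrt ((Fintype.card K : ℝ) ^ z) * Real.sqrt ((Fintype.card K : ℝ) ^ z)
      = (Fintype.card K : ℝ) ^ z := Real.mul_self_sqrt hXpos.le
  have hspos : (0 : ℝ) < Real.sqrt ((Fintype.card K : ℝ) ^ z) := Real.sqrt_pos.mpr hXpos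
  simp only [pnorm, one_mul]
  rcases isEmpty_or_nonempty St with hE | hNE
  · rw [Fintype.card_eq_zero]
    simp only [Nat.cast_zero, zero_mul]
    positivity
  · obtain ⟨p₀⟩ := hNE
    have hfacts := pair_facts hH p₀.2.1 p₀.2.2.1 p₀.2.2.2.1 p₀.2.2.2.2.1 p₀.2.2.2.2.2.1
    have hdz : F.natDegree ≤ z + H.natDegree := by
      rcases hfacts with ⟨h1, h2⟩
      omega
    rw [← div_eq_mul_inv, div_le_div_iff₀ hspos (pow_pos hq0r F.natDegree)]
    have hNcast : (Fintype.card St : ℝ) ≤ ((z : ℝ) + 1) * (Fintype.card K : ℝ) ^ e := by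
      exact_mod_cast hcard
    calc (Fintype.card St : ℝ) * (Fintype.card K : ℝ) ^ F.natDegree
        ≤ (((z : ℝ) + 1) * (Fintype.card K : ℝ) ^ e) * (Fintype.card K : ℝ) ^ F.natDegree := by
          exact mul_le_mul_of_nonneg_right hNcast (by positivity)
      _ = ((z : ℝ) + 1) * (Fintype.card K : ℝ) ^ (e + F.natDegree) := by
          rw [mul_assoc, pow_add]
      _ = ((z : ℝ) + 1) * (Fintype.card K : ℝ) ^ (z + H.natDegree) := by
          congr 2
          omega
      _ = Real.sqrt ((Fintype.card K : ℝ) ^ z) * ((z : ℝ) + 1) *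
            (Fintype.card K : ℝ) ^ H.natDegree * Real.sqrt ((Fintype.card K : ℝ) ^ z) := by
          rw [pow_add]
          linear_combination (-(((z : ℝ) + 1) * ((Fintype.card K : ℝ) ^ H.natDegree))) * hs
end
end

section
/- Let F, H, K, R be monic polynomials in F_q[T] with F | R, and let z < deg(R) be a natural number. Then Σ over pairs of monic A, B with deg(AB) = z, AH ≡ BK (mod F), AH ≠ BK, and gcd(ABHK, R) = 1, of 1/|AB|^{1/2}, is ≪ q^{z/2}·(z+1)·|HK|/|F|. -/
open Polynomial UniqueFactorizationMonoid
open scoped Classical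

noncomputable section

variable {Fq : Type} [Field Fq] [Fintype Fq]

/- ### Auxiliary material -/

instance finiteMonicSet (n : ℕ) : Finite {p : Fq[X] // p.Monic ∧ p.natDegree = n} :=
  Finite.of_equiv _ ((monicEquivDegreeLT n).trans (degreeLTEquiv Fq n).toEquiv).symm

lemma cardMonicSet (n : ℕ) :
    Nat.card {p : Fq[X] // p.Monic ∧ p.natDegree = n} = Fintype.card Fq ^ n := by
  rw [Nat.card_congr ((monicEquivDegreeLT n).trans (degreeLTEquiv Fq n).toEquiv)]
  simp [Nat.card_eq_fintype_card]

lemma monicDivHelper {f F : Fq[X]} (hf : f.Monic) (hF : F.Monic)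
    (h : F.natDegree ≤ f.natDegree) : (f /ₘ F).Monic := by
  have hle : F.degree ≤ f.degree := by
    rw [degree_eq_natDegree hF.ne_zero, degree_eq_natDegree hf.ne_zero]
    exact_mod_cast h
  have : (f /ₘ F).leadingCoeff = f.leadingCoeff :=
    leadingCoeff_divByMonic_of_monic hF hle
  rwa [Monic, this]

lemma eqOfDvdSubOfDivEq {F B B' : Fq[X]} (hF : F.Monic) (hd : F ∣ B - B')
    (hq : B /ₘ F = B' /ₘ F) : B = B' := by
  have h1 := modByMonic_add_div B F
  have h2 := modByMonic_add_div B' F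
  have key : B - B' = B %ₘ F - B' %ₘ F := by linear_combination h2 - h1 + F * hq
  have hz : B %ₘ F - B' %ₘ F = 0 :=
    eq_zero_of_dvd_of_degree_lt (by rwa [key] at hd)
      (lt_of_le_of_lt (degree_sub_le _ _)
        (max_lt (degree_modByMonic_lt _ hF) (degree_modByMonic_lt _ hF)))
  exact sub_eq_zero.mp (key.trans hz)

/-- The off-diagonal index set. -/
def SetD (F H K R : Fq[X]) (z : ℕ) : Set (Fq[X] × Fq[X]) :=
  {p | p.1.Monic ∧ p.2.Monic ∧ (p.1 * p.2).natDegree = z ∧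
      F ∣ p.1 * H - p.2 * K ∧ p.1 * H ≠ p.2 * K ∧ IsCoprime (p.1 * p.2 * H * K) R}

lemma memSetD {F H K R : Fq[X]} {z : ℕ} {p : Fq[X] × Fq[X]} (h : p ∈ SetD F H K R z) :
    p.1.Monic ∧ p.2.Monic ∧ (p.1 * p.2).natDegree = z ∧
      F ∣ p.1 * H - p.2 * K ∧ p.1 * H ≠ p.2 * K ∧ IsCoprime (p.1 * p.2 * H * K) R := h

/-- The fiber of the off-diagonal index set over a fixed degree of the first component. -/
def FibD (F H K R : Fq[X]) (z a : ℕ) : Type :=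
  {p : Fq[X] × Fq[X] // p ∈ SetD F H K R z ∧ p.1.natDegree = a}

instance finiteSetD (F H K R : Fq[X]) (z : ℕ) : Finite ↥(SetD F H K R z) := by
  haveI : Finite (degreeLT Fq (z+1)) := Finite.of_equiv _ (degreeLTEquiv Fq (z+1)).toEquiv.symm
  have hm : ∀ x : ↥(SetD F H K R z),
      x.1.1 ∈ degreeLT Fq (z+1) ∧ x.1.2 ∈ degreeLT Fq (z+1) := by
    rintro ⟨⟨A, B⟩, hA, hB, hzz, -⟩
    dsimp only at hA hB hzz ⊢
    rw [natDegree_mul hA.ne_zero hB.ne_zero] at hzz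
    constructor <;> rw [mem_degreeLT] <;>
      refine lt_of_le_of_lt degree_le_natDegree ?_
    · exact_mod_cast (by omega : A.natDegree < z + 1)
    · exact_mod_cast (by omega : B.natDegree < z + 1)
  exact Finite.of_injective
    (fun x => ((⟨x.1.1, (hm x).1⟩, ⟨x.1.2, (hm x).2⟩) :
      degreeLT Fq (z+1) × degreeLT Fq (z+1)))
    (fun x y h => Subtype.ext (Prod.ext (congrArg (fun t => t.1.1) h)
      (congrArg (fun t => t.2.1) h)))

/-- The key fiber counting bound. -/
lemma fibCardLe (F H K R : Fq[X]) (hF : F.Monic) (hH : H.Monic) (hK : K.Monic)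
    (hFR : F ∣ R) (z a : ℕ) :
    Nat.card (FibD F H K R z a) * Fintype.card Fq ^ F.natDegree
      ≤ Fintype.card Fq ^ (z + H.natDegree + K.natDegree) := by
  classical
  have hQ1 : 1 ≤ Fintype.card Fq := Fintype.card_pos
  rcases isEmpty_or_nonempty (FibD F H K R z a) with he | ⟨⟨⟨A0, B0⟩, hm0, ha0⟩⟩
  · simp [Nat.card_of_isEmpty]
  obtain ⟨hA0, hB0, hz0, hdvd0, hne0, hcop0⟩ := memSetD hm0
  dsimp only at hA0 hB0 hz0 hdvd0 hne0 hcop0 ha0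
  have hKF : IsCoprime K F :=
    (hcop0.of_mul_left_right).of_isCoprime_of_dvd_right hFR
  have hHF : IsCoprime H F :=
    ((hcop0.of_mul_left_left).of_mul_left_right).of_isCoprime_of_dvd_right hFR
  rw [natDegree_mul hA0.ne_zero hB0.ne_zero] at hz0
  have haz : a ≤ z := by omega
  have hB0d : B0.natDegree = z - a := by omega
  -- degrees of all fiber elements
  have hdegs : ∀ y : FibD F H K R z a, y.1.1.natDegree = a ∧ y.1.2.natDegree = z - a := by
    rintro ⟨⟨A, B⟩, hmem, ha⟩
    obtain ⟨hA, hB, hzz, -⟩ := memSetD hmem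
    dsimp only at hA hB hzz ha ⊢
    rw [natDegree_mul hA.ne_zero hB.ne_zero] at hzz
    exact ⟨ha, by omega⟩
  have hmon : ∀ y : FibD F H K R z a, y.1.1.Monic ∧ y.1.2.Monic :=
    fun y => ⟨(memSetD y.2.1).1, (memSetD y.2.1).2.1⟩
  -- determination of B from A mod F, and vice versa
  have hBdet : ∀ y y' : FibD F H K R z a, y.1.1 = y'.1.1 → F ∣ y.1.2 - y'.1.2 := by
    intro y y' hAA
    have hdvd := (memSetD y.2.1).2.2.2.1
    have hdvd' := (memSetD y'.2.1).2.2.2.1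
    refine hKF.symm.dvd_of_dvd_mul_right (y := y.1.2 - y'.1.2) ?_
    have heq : (y'.1.1 * H - y'.1.2 * K) - (y.1.1 * H - y.1.2 * K)
        = (y.1.2 - y'.1.2) * K := by rw [← hAA]; ring
    exact heq ▸ dvd_sub hdvd' hdvd
  have hAdet : ∀ y y' : FibD F H K R z a, y.1.2 = y'.1.2 → F ∣ y.1.1 - y'.1.1 := by
    intro y y' hBB
    have hdvd := (memSetD y.2.1).2.2.2.1
    have hdvd' := (memSetD y'.2.1).2.2.2.1
    refine hHF.symm.dvd_of_dvd_mul_right (y := y.1.1 - y'.1.1) ?_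
    have heq : (y.1.1 * H - y.1.2 * K) - (y'.1.1 * H - y'.1.2 * K)
        = (y.1.1 - y'.1.1) * H := by rw [hBB]; ring
    exact heq ▸ dvd_sub hdvd hdvd'
  by_cases h1 : F.natDegree ≤ z - a
  · -- quotient out F from B
    have mdiv : ∀ y : FibD F H K R z a, (y.1.2 /ₘ F).Monic ∧
        (y.1.2 /ₘ F).natDegree = z - a - F.natDegree := by
      intro y
      refine ⟨monicDivHelper (hmon y).2 hF (by rw [(hdegs y).2]; exact h1), ?_⟩
      rw [natDegree_divByMonic _ hF, (hdegs y).2]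
    have hinj : Function.Injective (fun y : FibD F H K R z a =>
        ((⟨y.1.1, (hmon y).1, (hdegs y).1⟩, ⟨y.1.2 /ₘ F, (mdiv y).1, (mdiv y).2⟩) :
          {p : Fq[X] // p.Monic ∧ p.natDegree = a} ×
          {p : Fq[X] // p.Monic ∧ p.natDegree = z - a - F.natDegree})) := by
      intro y y' h
      have e1 : y.1.1 = y'.1.1 := congrArg (fun t => t.1.1) h
      have e2 : y.1.2 /ₘ F = y'.1.2 /ₘ F := congrArg (fun t => t.2.1) h
      have eB : y.1.2 = y'.1.2 := eqOfDvdSubOfDivEq hF (hBdet y y' e1) e2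
      exact Subtype.ext (Prod.ext e1 eB)
    have hle := Nat.card_le_card_of_injective _ hinj
    rw [Nat.card_prod, cardMonicSet, cardMonicSet] at hle
    calc Nat.card (FibD F H K R z a) * Fintype.card Fq ^ F.natDegree
        ≤ Fintype.card Fq ^ a * Fintype.card Fq ^ (z - a - F.natDegree)
            * Fintype.card Fq ^ F.natDegree := Nat.mul_le_mul_right _ hle
      _ = Fintype.card Fq ^ (a + (z - a - F.natDegree) + F.natDegree) := by
          rw [pow_add, pow_add]
      _ ≤ Fintype.card Fq ^ (z + H.natDegree + K.natDegree) :=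
          Nat.pow_le_pow_right hQ1 (by omega)
  by_cases h2 : F.natDegree ≤ a
  · -- quotient out F from A
    have mdiv : ∀ y : FibD F H K R z a, (y.1.1 /ₘ F).Monic ∧
        (y.1.1 /ₘ F).natDegree = a - F.natDegree := by
      intro y
      refine ⟨monicDivHelper (hmon y).1 hF (by rw [(hdegs y).1]; exact h2), ?_⟩
      rw [natDegree_divByMonic _ hF, (hdegs y).1]
    have hinj : Function.Injective (fun y : FibD F H K R z a =>
        ((⟨y.1.1 /ₘ F, (mdiv y).1, (mdiv y).2⟩, ⟨y.1.2, (hmon y).2, (hdegs y).2⟩) :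
          {p : Fq[X] // p.Monic ∧ p.natDegree = a - F.natDegree} ×
          {p : Fq[X] // p.Monic ∧ p.natDegree = z - a})) := by
      intro y y' h
      have e2 : y.1.2 = y'.1.2 := congrArg (fun t => t.2.1) h
      have e1 : y.1.1 /ₘ F = y'.1.1 /ₘ F := congrArg (fun t => t.1.1) h
      have eA : y.1.1 = y'.1.1 := eqOfDvdSubOfDivEq hF (hAdet y y' e2) e1
      exact Subtype.ext (Prod.ext eA e2)
    have hle := Nat.card_le_card_of_injective _ hinj
    rw [Nat.card_prod, cardMonicSet, cardMonicSet] at hle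
    calc Nat.card (FibD F H K R z a) * Fintype.card Fq ^ F.natDegree
        ≤ Fintype.card Fq ^ (a - F.natDegree) * Fintype.card Fq ^ (z - a)
            * Fintype.card Fq ^ F.natDegree := Nat.mul_le_mul_right _ hle
      _ = Fintype.card Fq ^ (a - F.natDegree + (z - a) + F.natDegree) := by
          rw [pow_add, pow_add]
      _ ≤ Fintype.card Fq ^ (z + H.natDegree + K.natDegree) :=
          Nat.pow_le_pow_right hQ1 (by omega)
  -- both degrees below deg F
  have hDne : A0 * H - B0 * K ≠ 0 := sub_ne_zero.mpr hne0
  have h4 := natDegree_le_of_dvd hdvd0 hDne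
  have h5 := natDegree_sub_le (A0 * H) (B0 * K)
  have h6 := natDegree_mul_le (p := A0) (q := H)
  have h7 := natDegree_mul_le (p := B0) (q := K)
  have hdF : F.natDegree ≤ a + H.natDegree ∨ F.natDegree ≤ (z - a) + K.natDegree := by
    rcases le_max_iff.mp (h4.trans h5) with hc | hc
    · left; omega
    · right; omega
  have hFdeg : F.degree = (F.natDegree : WithBot ℕ) := degree_eq_natDegree hF.ne_zero
  by_cases h3 : F.natDegree ≤ (z - a) + H.natDegree + K.natDegree
  · -- inject on A : B is determined by A
    have hinj : Function.Injective (fun y : FibD F H K R z a =>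
        (⟨y.1.1, (hmon y).1, (hdegs y).1⟩ : {p : Fq[X] // p.Monic ∧ p.natDegree = a})) := by
      intro y y' h
      have e1 : y.1.1 = y'.1.1 := congrArg (fun t => t.1) h
      have hd := hBdet y y' e1
      have hlt : (y.1.2 - y'.1.2).degree < F.degree := by
        rw [hFdeg]
        refine lt_of_le_of_lt (degree_sub_le _ _) (max_lt ?_ ?_) <;>
          refine lt_of_le_of_lt degree_le_natDegree ?_
        · exact_mod_cast (by rw [(hdegs y).2]; omega : y.1.2.natDegree < F.natDegree)
        · exact_mod_cast (by rw [(hdegs y').2]; omega : y'.1.2.natDegree < F.natDegree)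
      have eB : y.1.2 = y'.1.2 := sub_eq_zero.mp (eq_zero_of_dvd_of_degree_lt hd hlt)
      exact Subtype.ext (Prod.ext e1 eB)
    have hle := Nat.card_le_card_of_injective _ hinj
    rw [cardMonicSet] at hle
    calc Nat.card (FibD F H K R z a) * Fintype.card Fq ^ F.natDegree
        ≤ Fintype.card Fq ^ a * Fintype.card Fq ^ F.natDegree := Nat.mul_le_mul_right _ hle
      _ = Fintype.card Fq ^ (a + F.natDegree) := by rw [pow_add]
      _ ≤ Fintype.card Fq ^ (z + H.natDegree + K.natDegree) :=
          Nat.pow_le_pow_right hQ1 (by omega)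
  · -- inject on B : A is determined by B
    have h3' : F.natDegree ≤ a + H.natDegree + K.natDegree := by
      rcases hdF with hc | hc <;> omega
    have hinj : Function.Injective (fun y : FibD F H K R z a =>
        (⟨y.1.2, (hmon y).2, (hdegs y).2⟩ :
          {p : Fq[X] // p.Monic ∧ p.natDegree = z - a})) := by
      intro y y' h
      have e2 : y.1.2 = y'.1.2 := congrArg (fun t => t.1) h
      have hd := hAdet y y' e2
      have hlt : (y.1.1 - y'.1.1).degree < F.degree := by
        rw [hFdeg]
        refine lt_of_le_of_lt (degree_sub_le _ _) (max_lt ?_ ?_) <;>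
          refine lt_of_le_of_lt degree_le_natDegree ?_
        · exact_mod_cast (by rw [(hdegs y).1]; omega : y.1.1.natDegree < F.natDegree)
        · exact_mod_cast (by rw [(hdegs y').1]; omega : y'.1.1.natDegree < F.natDegree)
      have eA : y.1.1 = y'.1.1 := sub_eq_zero.mp (eq_zero_of_dvd_of_degree_lt hd hlt)
      exact Subtype.ext (Prod.ext eA e2)
    have hle := Nat.card_le_card_of_injective _ hinj
    rw [cardMonicSet] at hle
    calc Nat.card (FibD F H K R z a) * Fintype.card Fq ^ F.natDegree
        ≤ Fintype.card Fq ^ (z - a) * Fintype.card Fq ^ F.natDegree :=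
          Nat.mul_le_mul_right _ hle
      _ = Fintype.card Fq ^ (z - a + F.natDegree) := by rw [pow_add]
      _ ≤ Fintype.card Fq ^ (z + H.natDegree + K.natDegree) :=
          Nat.pow_le_pow_right hQ1 (by omega)

/-- Off-diagonal bound with two twists: for monic `F, H, K, R` with `F ∣ R` and
`z < deg R`, `Σ_{A,B monic, deg(AB)=z, AH ≡ BK (mod F), AH ≠ BK, (ABHK,R)=1} |AB|^{-1/2}`
`≪ q^{z/2} (z+1) |HK| / |F|`. -/
theorem offdiagonal_two_twists : ∃ C : ℝ, 0 < C ∧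
    ∀ (Fqq : Type) [Field Fqq] [Fintype Fqq] (F H K R : Fqq[X]),
      F.Monic → H.Monic → K.Monic → R.Monic → F ∣ R → ∀ z : ℕ, z < R.natDegree →
        ∑' p : {p : Fqq[X] × Fqq[X] // p.1.Monic ∧ p.2.Monic ∧ (p.1 * p.2).natDegree = z ∧
              F ∣ p.1 * H - p.2 * K ∧ p.1 * H ≠ p.2 * K ∧
              IsCoprime (p.1 * p.2 * H * K) R},
            (Real.sqrt (pnorm (p.1.1 * p.1.2)))⁻¹
          ≤ C * Real.sqrt ((Fintype.card Fqq : ℝ) ^ z) * ((z : ℝ) + 1) *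
              pnorm (H * K) / pnorm F := by
  refine ⟨1, one_pos, ?_⟩
  intro Fqq _ _ F H K R hF hH hK hR hFR z hz
  classical
  have hq0 : (0 : ℝ) < (Fintype.card Fqq : ℝ) := by exact_mod_cast Fintype.card_pos
  show (∑' p : ↥(SetD F H K R z), (Real.sqrt (pnorm (p.1.1 * p.1.2)))⁻¹) ≤ _
  haveI := Fintype.ofFinite ↥(SetD F H K R z)
  rw [tsum_fintype]
  have hdegA : ∀ x : ↥(SetD F H K R z), x.1.1.natDegree ≤ z := by
    rintro ⟨⟨A, B⟩, hA, hB, hzz, -⟩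
    dsimp only at hA hB hzz ⊢
    rw [natDegree_mul hA.ne_zero hB.ne_zero] at hzz
    omega
  have hterm : ∀ x : ↥(SetD F H K R z),
      (Real.sqrt (pnorm (x.1.1 * x.1.2)))⁻¹
        = (Real.sqrt ((Fintype.card Fqq : ℝ) ^ z))⁻¹ := by
    rintro ⟨⟨A, B⟩, hA, hB, hzz, -⟩
    dsimp only at hzz ⊢
    simp only [pnorm, hzz]
  have hmaps : ∀ x : ↥(SetD F H K R z), x ∈ Finset.univ →
      x.1.1.natDegree ∈ Finset.range (z + 1) :=
    fun x _ => Finset.mem_range.mpr (Nat.lt_succ_of_le (hdegA x))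
  rw [← Finset.sum_fiberwise_of_maps_to hmaps]
  have hcardeq : ∀ b : ℕ,
      (Finset.univ.filter (fun x : ↥(SetD F H K R z) => x.1.1.natDegree = b)).card
        = Nat.card (FibD F H K R z b) := by
    intro b
    rw [← Fintype.card_subtype, ← Nat.card_eq_fintype_card]
    exact Nat.card_congr ⟨fun x => ⟨x.1.1, x.1.2, x.2⟩, fun y => ⟨⟨y.1, y.2.1⟩, y.2.2⟩,
      fun _ => rfl, fun _ => rfl⟩
  set c : ℝ := (Real.sqrt ((Fintype.card Fqq : ℝ) ^ z))⁻¹ with hc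
  have hcpos : 0 ≤ c := by
    rw [hc]
    positivity
  have hfib : ∀ b ∈ Finset.range (z + 1),
      (∑ x ∈ Finset.univ.filter (fun x : ↥(SetD F H K R z) => x.1.1.natDegree = b),
        (Real.sqrt (pnorm (x.1.1 * x.1.2)))⁻¹)
      ≤ ((Fintype.card Fqq : ℝ) ^ (z + H.natDegree + K.natDegree)
          / (Fintype.card Fqq : ℝ) ^ F.natDegree) * c := by
    intro b _
    have hna : ((Nat.card (FibD F H K R z b) : ℝ))
        ≤ (Fintype.card Fqq : ℝ) ^ (z + H.natDegree + K.natDegree)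
          / (Fintype.card Fqq : ℝ) ^ F.natDegree := by
      rw [le_div_iff₀ (by positivity)]
      exact_mod_cast fibCardLe F H K R hF hH hK hFR z b
    calc (∑ x ∈ Finset.univ.filter (fun x : ↥(SetD F H K R z) => x.1.1.natDegree = b),
          (Real.sqrt (pnorm (x.1.1 * x.1.2)))⁻¹)
        = ∑ _x ∈ Finset.univ.filter (fun x : ↥(SetD F H K R z) => x.1.1.natDegree = b), c :=
          Finset.sum_congr rfl (fun x _ => hterm x)
      _ = ((Nat.card (FibD F H K R z b)) : ℝ) * c := by
          rw [Finset.sum_const, hcardeq b, nsmul_eq_mul]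
      _ ≤ _ := mul_le_mul_of_nonneg_right hna hcpos
  refine le_trans (Finset.sum_le_sum hfib) ?_
  rw [Finset.sum_const, Finset.card_range, nsmul_eq_mul]
  apply le_of_eq
  have hsq : Real.sqrt ((Fintype.card Fqq : ℝ) ^ z) * Real.sqrt ((Fintype.card Fqq : ℝ) ^ z)
      = (Fintype.card Fqq : ℝ) ^ z := Real.mul_self_sqrt (by positivity)
  have hsqpos : 0 < Real.sqrt ((Fintype.card Fqq : ℝ) ^ z) :=
    Real.sqrt_pos.mpr (by positivity)
  have hHK : pnorm (H * K) = (Fintype.card Fqq : ℝ) ^ (H.natDegree + K.natDegree) := by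
    simp only [pnorm]
    rw [natDegree_mul hH.ne_zero hK.ne_zero]
  rw [hHK]
  simp only [pnorm, hc]
  rw [pow_add, pow_add]
  field_simp
  ring_nf
  rw [Real.sq_sqrt (by positivity : (0:ℝ) ≤ (Fintype.card Fqq : ℝ) ^ z)]
  push_cast
  ring
end
end
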